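/- For the twist F_h = exp(i h w⁰_{11} ⊗ w⁺_2), the twisted coproduct of w⁰_{21} is Δ_{F_h}(w⁰_{21}) = w⁰_{21}⊗1 + 1⊗w⁰_{21} + h w⁰_{11} ⊗ w⁺_1 + w⁰_{21} ⊗ (e^{-h w⁺_2} - 1), and of w⁺_1 is Δ_{F_h}(w⁺_1) = w⁺_1⊗1 + 1⊗w⁺_1 + w⁺_1 ⊗ (e^{-h w⁺_2} - 1), while Δ_{F_h}(w⁰_{11}) and Δ_{F_h}(w⁺_2) remain primitive. -/

import Mathlib

open NormedSpace Nat

section AuxExp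
variable {B : Type*} [NormedRing B] [NormedAlgebra ℂ B] [CompleteSpace B]

lemma exp_add_of_commute_C {A C : B} (hxy : Commute A C) : exp (A + C) = exp A * exp C :=
  exp_add_of_commute_of_mem_ball (𝕂 := ℂ) hxy
    ((expSeries_radius_eq_top ℂ B).symm ▸ edist_lt_top _ _)
    ((expSeries_radius_eq_top ℂ B).symm ▸ edist_lt_top _ _)

lemma pow_mul_shift {A X C : B} (hx : A * X = X * C) :
    ∀ k : ℕ, A ^ k * X = X * C ^ k := by
  intro k
  induction k with
  | zero => simp
  | succ k ih =>
    rw [pow_succ, pow_succ, mul_assoc, hx, ← mul_assoc, ih, mul_assoc]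

lemma exp_mul_shift {A X C : B} (hx : A * X = X * C) :
    exp A * X = X * exp C := by
  simp only [exp_eq_tsum ℂ]
  rw [← (expSeries_summable' (𝕂 := ℂ) A).tsum_mul_right X,
      ← (expSeries_summable' (𝕂 := ℂ) C).tsum_mul_left X]
  congr 1
  funext k
  rw [smul_mul_assoc, pow_mul_shift hx, mul_smul_comm]

lemma exp_mul_deriv {A X Y : B} (hx : A * X = X * A + Y) (hy : A * Y = Y * A) :
    exp A * X = X * exp A + Y * exp A := by
  have hpow : ∀ k : ℕ, A ^ (k + 1) * X
      = X * A ^ (k + 1) + ((k + 1 : ℕ) : ℂ) • (Y * A ^ k) := by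
    intro k
    induction k with
    | zero => simpa using hx
    | succ k ih =>
      have e1 : A ^ (k + 1 + 1) * X = A ^ (k + 1) * (A * X) := by
        rw [pow_succ, mul_assoc]
      rw [e1, hx, mul_add, ← mul_assoc, ih, pow_mul_shift hy,
        add_mul, smul_mul_assoc, mul_assoc X, ← pow_succ, mul_assoc Y, ← pow_succ]
      push_cast
      module
  set u : ℕ → B := fun k => ((k ! : ℂ)⁻¹) • A ^ k with hu
  have hus : Summable u := expSeries_summable' (𝕂 := ℂ) A
  set v : ℕ → B := fun k => ((k : ℂ) * ((k ! : ℂ))⁻¹) • (Y * A ^ (k - 1)) with hv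
  have hvsucc : ∀ k : ℕ, v (k + 1) = Y * u k := by
    intro k
    have hne : ((k ! : ℕ) : ℂ) ≠ 0 :=
      Nat.cast_ne_zero.mpr (Nat.factorial_ne_zero k)
    have hc : ((k : ℂ) + 1) * (((k + 1)! : ℂ))⁻¹ = ((k ! : ℂ))⁻¹ := by
      rw [Nat.factorial_succ]
      push_cast
      rw [mul_inv]
      rw [← mul_assoc, mul_inv_cancel₀ (Nat.cast_add_one_ne_zero k), one_mul]
    simp only [hv, hu, Nat.add_sub_cancel, mul_smul_comm]
    rw [← hc]
    push_cast
    ring_nf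
  have hvs : Summable v := by
    rw [← summable_nat_add_iff 1]
    simp only [hvsucc]
    exact hus.mul_left Y
  have hkey : ∀ k : ℕ, u k * X = X * u k + v k := by
    intro k
    cases k with
    | zero => simp [hu, hv]
    | succ k =>
      simp only [hu, hv, smul_mul_assoc, hpow k, Nat.add_sub_cancel]
      rw [smul_add, mul_smul_comm, smul_smul]
      push_cast
      module
  calc exp A * X = (∑' k, u k) * X := by rw [exp_eq_tsum ℂ]
    _ = ∑' k, u k * X := (hus.tsum_mul_right X).symm
    _ = ∑' k, (X * u k + v k) := by simp only [hkey]
    _ = (∑' k, X * u k) + ∑' k, v k := Summable.tsum_add (hus.mul_left X) hvs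
    _ = X * exp A + Y * exp A := by
        have h0 : v 0 = 0 := by simp [hv]
        rw [hus.tsum_mul_left X, Summable.tsum_eq_zero_add hvs, h0, zero_add]
        simp only [hvsucc]
        rw [hus.tsum_mul_left Y]
        simp only [exp_eq_tsum ℂ]
        rfl

lemma exp_conj_of_commute {A X : B} (hc : Commute A X) :
    exp A * X * exp (-A) = X := by
  rw [((hc.exp_left)).eq, mul_assoc,
    ← exp_add_of_commute_C ((Commute.refl A).neg_right), add_neg_cancel, exp_zero, mul_one]

lemma exp_mul_exp_neg (A : B) : exp A * exp (-A) = 1 := by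
  rw [← exp_add_of_commute_C ((Commute.refl A).neg_right), add_neg_cancel, exp_zero]

end AuxExp

section AuxMain
variable {B : Type*} [NormedRing B] [NormedAlgebra ℂ B] [CompleteSpace B]

lemma twist_main (a b c d p p' q q2 : B) (h : ℝ)
    (hab : a * b = b * a + Complex.I • b)
    (hap : a * p = p * a + Complex.I • p)
    (hcq2 : c * q2 = q2 * c + Complex.I • q)
    (hac : Commute a c) (had : Commute a d) (haq : Commute a q)
    (haq2 : Commute a q2) (hap' : Commute a p')
    (hbq2 : Commute b q2) (hpq2 : Commute p q2)
    (hdq2 : Commute d q2) (hp'q2 : Commute p' q2)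
    (hqq2 : Commute q q2) :
    (exp ((Complex.I * (h : ℂ)) • (a * q2)) * (b + c)
        * exp (-((Complex.I * (h : ℂ)) • (a * q2)))
      = b + c + (h : ℂ) • (a * q) + b * (exp (-((h : ℂ) • q2)) - 1)) ∧
    (exp ((Complex.I * (h : ℂ)) • (a * q2)) * (p + q)
        * exp (-((Complex.I * (h : ℂ)) • (a * q2)))
      = p + q + p * (exp (-((h : ℂ) • q2)) - 1)) ∧
    (exp ((Complex.I * (h : ℂ)) • (a * q2)) * (a + d)
        * exp (-((Complex.I * (h : ℂ)) • (a * q2)))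
      = a + d) ∧
    (exp ((Complex.I * (h : ℂ)) • (a * q2)) * (p' + q2)
        * exp (-((Complex.I * (h : ℂ)) • (a * q2)))
      = p' + q2) := by
  set A : B := (Complex.I * (h : ℂ)) • (a * q2) with hA
  have hAa : Commute A a := ((Commute.refl a).mul_left haq2.symm).smul_left _
  have hAd : Commute A d := (had.mul_left hdq2.symm).smul_left _
  have hAq : Commute A q := (haq.mul_left hqq2.symm).smul_left _
  have hAq2 : Commute A q2 := (haq2.mul_left (Commute.refl q2)).smul_left _
  have hAp' : Commute A p' := (hap'.mul_left hp'q2.symm).smul_left _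
  have hIh : Complex.I * (h : ℂ) * Complex.I = -(h : ℂ) := by
    rw [mul_comm Complex.I (h : ℂ), mul_assoc, Complex.I_mul_I, mul_neg_one]
  -- the conjugation of an element x with [a,x] = I x, [q2,x]=0
  have conj_shift : ∀ x : B, a * x = x * a + Complex.I • x → Commute x q2 →
      exp A * x * exp (-A) = x * exp (-((h : ℂ) • q2)) := by
    intro x hax hxq2
    have hshift : A * x = x * (A + -((h : ℂ) • q2)) := by
      have e1 : a * q2 * x = x * (a * q2) + Complex.I • (x * q2) := by
        rw [mul_assoc, ← hxq2.eq, ← mul_assoc, hax, add_mul, smul_mul_assoc, mul_assoc]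
      calc A * x = (Complex.I * (h : ℂ)) • (a * q2 * x) := by rw [hA, smul_mul_assoc]
        _ = (Complex.I * (h : ℂ)) • (x * (a * q2))
            + (Complex.I * (h : ℂ) * Complex.I) • (x * q2) := by
            rw [e1, smul_add, smul_smul]
        _ = x * A + -((h : ℂ) • (x * q2)) := by
            rw [mul_smul_comm, hIh, neg_smul]
        _ = x * (A + -((h : ℂ) • q2)) := by
            rw [mul_add, mul_neg, mul_smul_comm (h : ℂ) x q2]
    have h1 := exp_mul_shift hshift
    have hcomm : Commute (-((h : ℂ) • q2)) A := ((hAq2.symm.smul_left _).neg_left)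
    have h3 : exp (A + -((h : ℂ) • q2))
        = exp (-((h : ℂ) • q2)) * exp A := by
      rw [add_comm, exp_add_of_commute_C hcomm]
    rw [h1, h3, ← mul_assoc, mul_assoc _ (exp A), exp_mul_exp_neg, mul_one]
  -- conjugation of commuting elements
  have conj_b := conj_shift b hab hbq2
  have conj_p := conj_shift p hap hpq2
  -- conjugation of c
  have hYc : A * c = c * A + (h : ℂ) • (a * q) := by
    have hq2c : q2 * c = c * q2 - Complex.I • q := by
      rw [hcq2]; abel
    have e1 : a * q2 * c = c * (a * q2) - Complex.I • (a * q) := by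
      rw [mul_assoc, hq2c, mul_sub, ← mul_assoc, hac.eq, mul_smul_comm, mul_assoc]
    calc A * c = (Complex.I * (h : ℂ)) • (a * q2 * c) := by rw [hA, smul_mul_assoc]
      _ = (Complex.I * (h : ℂ)) • (c * (a * q2))
          - (Complex.I * (h : ℂ) * Complex.I) • (a * q) := by
          rw [e1, smul_sub, smul_smul]
      _ = c * A + (h : ℂ) • (a * q) := by
          rw [mul_smul_comm, hIh, neg_smul, sub_neg_eq_add]
  have hAY : Commute A ((h : ℂ) • (a * q)) :=
    ((((Commute.refl a).mul_right haq).mul_left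
      (haq2.symm.mul_right hqq2.symm)).smul_left _).smul_right _
  have conj_c : exp A * c * exp (-A) = c + (h : ℂ) • (a * q) := by
    rw [exp_mul_deriv hYc hAY.eq, add_mul, mul_assoc, mul_assoc, exp_mul_exp_neg,
      mul_one, mul_one]
  have conj_q : exp A * q * exp (-A) = q := exp_conj_of_commute hAq
  refine ⟨?_, ?_, ?_, ?_⟩
  · rw [mul_add, add_mul, conj_b, conj_c, mul_sub, mul_one]
    abel
  · rw [mul_add, add_mul, conj_p, conj_q, mul_sub, mul_one]
    abel
  · exact exp_conj_of_commute (hAa.add_right hAd)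
  · exact exp_conj_of_commute (hAp'.add_right hAq2)

end AuxMain

/-- For the twist `F_h = exp(i h w⁰_{11} ⊗ w⁺_2)` (in `W(Π,X)` with
`n ≥ 2`, suitably completed), the twisted coproduct of `w⁰_{21}` is
`Δ_{F_h}(w⁰_{21}) = w⁰_{21}⊗1 + 1⊗w⁰_{21} + h w⁰_{11} ⊗ w⁺_1 + w⁰_{21} ⊗ (e^{-h w⁺_2} - 1)`,
and of `w⁺_1` is
`Δ_{F_h}(w⁺_1) = w⁺_1⊗1 + 1⊗w⁺_1 + w⁺_1 ⊗ (e^{-h w⁺_2} - 1)`, while `Δ_{F_h}(w⁰_{11})`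
and `Δ_{F_h}(w⁺_2)` remain primitive.

The completed tensor square of `W(Π,X)` is abstracted as a complete normed algebra `B`
with `W01 i r = w⁰_{ir}⊗1`, `W02 i r = 1⊗w⁰_{ir}`, `Wp1 r = w⁺_r⊗1`, `Wp2 r = 1⊗w⁺_r`
(indices written with `0,1 : Fin n` standing for the paper's `1,2`); the relations
`[w⁰_{ir}, w⁰_{js}] = -iδ_{rj}w⁰_{is} + iδ_{si}w⁰_{jr}`,
`[w⁰_{ir}, w⁺_s] = iδ_{si}w⁺_r`, `[w⁺_r, w⁺_s] = 0` hold in each slot, and different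
slots commute. -/
theorem h_twist_coproducts (n : ℕ) (hn : 2 ≤ n) (h : ℝ) (B : Type*)
    [NormedRing B] [NormedAlgebra ℂ B] [CompleteSpace B]
    (W01 W02 : Fin n → Fin n → B) (Wp1 Wp2 : Fin n → B)
    -- relations in the first slot
    (h001 : ∀ i r j s, W01 i r * W01 j s - W01 j s * W01 i r
      = (if r = j then -Complex.I else 0) • W01 i s
        + (if s = i then Complex.I else 0) • W01 j r)
    (h0p1 : ∀ i r s, W01 i r * Wp1 s - Wp1 s * W01 i r
      = (if s = i then Complex.I else 0) • Wp1 r)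
    (hpp1 : ∀ r s, Commute (Wp1 r) (Wp1 s))
    -- relations in the second slot
    (h002 : ∀ i r j s, W02 i r * W02 j s - W02 j s * W02 i r
      = (if r = j then -Complex.I else 0) • W02 i s
        + (if s = i then Complex.I else 0) • W02 j r)
    (h0p2 : ∀ i r s, W02 i r * Wp2 s - Wp2 s * W02 i r
      = (if s = i then Complex.I else 0) • Wp2 r)
    (hpp2 : ∀ r s, Commute (Wp2 r) (Wp2 s))
    -- the two slots commute
    (hc00 : ∀ i r j s, Commute (W01 i r) (W02 j s))
    (hc0p : ∀ i r s, Commute (W01 i r) (Wp2 s))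
    (hcp0 : ∀ r j s, Commute (Wp1 r) (W02 j s))
    (hcpp : ∀ r s, Commute (Wp1 r) (Wp2 s)) :
    -- `Δ_{F_h}(w⁰_{21})`
    (exp ((Complex.I * (h : ℂ)) •
          (W01 ⟨0, by omega⟩ ⟨0, by omega⟩ * Wp2 ⟨1, by omega⟩))
        * (W01 ⟨1, by omega⟩ ⟨0, by omega⟩ + W02 ⟨1, by omega⟩ ⟨0, by omega⟩)
        * exp (-((Complex.I * (h : ℂ)) •
          (W01 ⟨0, by omega⟩ ⟨0, by omega⟩ * Wp2 ⟨1, by omega⟩)))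
      = W01 ⟨1, by omega⟩ ⟨0, by omega⟩ + W02 ⟨1, by omega⟩ ⟨0, by omega⟩
        + (h : ℂ) • (W01 ⟨0, by omega⟩ ⟨0, by omega⟩ * Wp2 ⟨0, by omega⟩)
        + W01 ⟨1, by omega⟩ ⟨0, by omega⟩
            * (exp (-((h : ℂ) • Wp2 ⟨1, by omega⟩)) - 1)) ∧
    -- `Δ_{F_h}(w⁺_1)`
    (exp ((Complex.I * (h : ℂ)) •
          (W01 ⟨0, by omega⟩ ⟨0, by omega⟩ * Wp2 ⟨1, by omega⟩))
        * (Wp1 ⟨0, by omega⟩ + Wp2 ⟨0, by omega⟩)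
        * exp (-((Complex.I * (h : ℂ)) •
          (W01 ⟨0, by omega⟩ ⟨0, by omega⟩ * Wp2 ⟨1, by omega⟩)))
      = Wp1 ⟨0, by omega⟩ + Wp2 ⟨0, by omega⟩
        + Wp1 ⟨0, by omega⟩ * (exp (-((h : ℂ) • Wp2 ⟨1, by omega⟩)) - 1)) ∧
    -- `Δ_{F_h}(w⁰_{11})` remains primitive
    (exp ((Complex.I * (h : ℂ)) •
          (W01 ⟨0, by omega⟩ ⟨0, by omega⟩ * Wp2 ⟨1, by omega⟩))
        * (W01 ⟨0, by omega⟩ ⟨0, by omega⟩ + W02 ⟨0, by omega⟩ ⟨0, by omega⟩)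
        * exp (-((Complex.I * (h : ℂ)) •
          (W01 ⟨0, by omega⟩ ⟨0, by omega⟩ * Wp2 ⟨1, by omega⟩)))
      = W01 ⟨0, by omega⟩ ⟨0, by omega⟩ + W02 ⟨0, by omega⟩ ⟨0, by omega⟩) ∧
    -- `Δ_{F_h}(w⁺_2)` remains primitive
    (exp ((Complex.I * (h : ℂ)) •
          (W01 ⟨0, by omega⟩ ⟨0, by omega⟩ * Wp2 ⟨1, by omega⟩))
        * (Wp1 ⟨1, by omega⟩ + Wp2 ⟨1, by omega⟩)
        * exp (-((Complex.I * (h : ℂ)) •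
          (W01 ⟨0, by omega⟩ ⟨0, by omega⟩ * Wp2 ⟨1, by omega⟩)))
      = Wp1 ⟨1, by omega⟩ + Wp2 ⟨1, by omega⟩) := by
  
  have h1 : (0:ℕ) < n := by omega
  have h2 : (1:ℕ) < n := by omega
  have hne10 : (⟨1, h2⟩ : Fin n) ≠ ⟨0, h1⟩ := by simp
  have hne01 : (⟨0, h1⟩ : Fin n) ≠ ⟨1, h2⟩ := by simp
  have hab : W01 ⟨0,h1⟩ ⟨0,h1⟩ * W01 ⟨1,h2⟩ ⟨0,h1⟩
      = W01 ⟨1,h2⟩ ⟨0,h1⟩ * W01 ⟨0,h1⟩ ⟨0,h1⟩ + Complex.I • W01 ⟨1,h2⟩ ⟨0,h1⟩ := by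
    have h' := h001 ⟨1,h2⟩ ⟨0,h1⟩ ⟨0,h1⟩ ⟨0,h1⟩
    rw [if_pos rfl, if_neg hne01, zero_smul, add_zero] at h'
    have e : W01 ⟨0,h1⟩ ⟨0,h1⟩ * W01 ⟨1,h2⟩ ⟨0,h1⟩
        = W01 ⟨1,h2⟩ ⟨0,h1⟩ * W01 ⟨0,h1⟩ ⟨0,h1⟩
          - (W01 ⟨1,h2⟩ ⟨0,h1⟩ * W01 ⟨0,h1⟩ ⟨0,h1⟩
            - W01 ⟨0,h1⟩ ⟨0,h1⟩ * W01 ⟨1,h2⟩ ⟨0,h1⟩) := by abel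
    rw [e, h', neg_smul, sub_neg_eq_add]
  have hap : W01 ⟨0,h1⟩ ⟨0,h1⟩ * Wp1 ⟨0,h1⟩
      = Wp1 ⟨0,h1⟩ * W01 ⟨0,h1⟩ ⟨0,h1⟩ + Complex.I • Wp1 ⟨0,h1⟩ := by
    have h' := h0p1 ⟨0,h1⟩ ⟨0,h1⟩ ⟨0,h1⟩
    rw [if_pos rfl] at h'
    rw [sub_eq_iff_eq_add.mp h', add_comm]
  have hcq2 : W02 ⟨1,h2⟩ ⟨0,h1⟩ * Wp2 ⟨1,h2⟩
      = Wp2 ⟨1,h2⟩ * W02 ⟨1,h2⟩ ⟨0,h1⟩ + Complex.I • Wp2 ⟨0,h1⟩ := by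
    have h' := h0p2 ⟨1,h2⟩ ⟨0,h1⟩ ⟨1,h2⟩
    rw [if_pos rfl] at h'
    rw [sub_eq_iff_eq_add.mp h', add_comm]
  have hap' : Commute (W01 ⟨0,h1⟩ ⟨0,h1⟩) (Wp1 ⟨1,h2⟩) := by
    have h' := h0p1 ⟨0,h1⟩ ⟨0,h1⟩ ⟨1,h2⟩
    rw [if_neg hne10, zero_smul] at h'
    exact sub_eq_zero.mp h'
  have hdq2 : Commute (W02 ⟨0,h1⟩ ⟨0,h1⟩) (Wp2 ⟨1,h2⟩) := by
    have h' := h0p2 ⟨0,h1⟩ ⟨0,h1⟩ ⟨1,h2⟩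
    rw [if_neg hne10, zero_smul] at h'
    exact sub_eq_zero.mp h'
  exact twist_main (W01 ⟨0,h1⟩ ⟨0,h1⟩) (W01 ⟨1,h2⟩ ⟨0,h1⟩) (W02 ⟨1,h2⟩ ⟨0,h1⟩)
    (W02 ⟨0,h1⟩ ⟨0,h1⟩) (Wp1 ⟨0,h1⟩) (Wp1 ⟨1,h2⟩) (Wp2 ⟨0,h1⟩) (Wp2 ⟨1,h2⟩) h
    hab hap hcq2
    (hc00 ⟨0,h1⟩ ⟨0,h1⟩ ⟨1,h2⟩ ⟨0,h1⟩) (hc00 ⟨0,h1⟩ ⟨0,h1⟩ ⟨0,h1⟩ ⟨0,h1⟩)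
    (hc0p ⟨0,h1⟩ ⟨0,h1⟩ ⟨0,h1⟩) (hc0p ⟨0,h1⟩ ⟨0,h1⟩ ⟨1,h2⟩) hap'
    (hc0p ⟨1,h2⟩ ⟨0,h1⟩ ⟨1,h2⟩) (hcpp ⟨0,h1⟩ ⟨1,h2⟩) hdq2 (hcpp ⟨1,h2⟩ ⟨1,h2⟩)
    (hpp2 ⟨0,h1⟩ ⟨1,h2⟩)
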